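/- Let κ_{n,d} be the 1/n quantile of Beta((d-1)/2,(d-1)/2), d ≥ 3. If n = n(d) → ∞ with (log n)/d → 0 as d → ∞, then κ_{n,d} → 1/2; if instead n^{1/d} → ∞ as d → ∞, then κ_{n,d} → 0. -/

import Mathlib

open MeasureTheory Real Set
open scoped ENNReal NNReal

/-- The Beta function `B(a,b)` as an integral. -/
noncomputable def betaFun (a b : ℝ) : ℝ :=
  ∫ x in (0:ℝ)..1, x ^ (a - 1) * (1 - x) ^ (b - 1)

/-- The Beta(a,b) probability measure on `ℝ`. -/
noncomputable def betaMeasure (a b : ℝ) : Measure ℝ :=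
  MeasureTheory.volume.withDensity
    (Set.indicator (Set.Ioo 0 1)
      (fun t => ENNReal.ofReal (t ^ (a - 1) * (1 - t) ^ (b - 1) / betaFun a b)))

/-- The regularised incomplete Beta function `I_x(a,b)`, with the convention that it is
`0` for `x ≤ 0` and `1` for `x ≥ 1`. -/
noncomputable def regIncBeta (a b x : ℝ) : ℝ :=
  if x ≤ 0 then 0 else if 1 ≤ x then 1
  else (∫ s in (0:ℝ)..x, s ^ (a - 1) * (1 - s) ^ (b - 1)) / betaFun a b

/-- The uniform probability measure on the sphere of radius `a` centred at the origin
of `ℝ^d`, obtained by normalising the surface measure on the unit sphere and scaling. -/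
noncomputable def sphereUniform (d : ℕ) (a : ℝ) : Measure (EuclideanSpace ℝ (Fin d)) :=
  Measure.map (fun x => a • x)
    ((((MeasureTheory.volume : Measure (EuclideanSpace ℝ (Fin d))).toSphere Set.univ)⁻¹) •
      Measure.map Subtype.val
        ((MeasureTheory.volume : Measure (EuclideanSpace ℝ (Fin d))).toSphere))

/-! With `c = a - 1 = (d - 3)/2`, the Beta density is proportional to `(s (1 - s)) ^ c`, which
concentrates at `1/2` exponentially fast in `d`. Bounding `s (1 - s)` by constants on suitable
intervals gives: if `κ ≤ 1/2 - ε` then `1/n ≤ q ^ c / ε` with `q = (1 - 4ε²)/(1 - ε²) < 1`, so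
`log n ≥ c · (-log q) + log ε` grows linearly in `d`; and if `κ ≥ ε` then
`1/n ≥ (ε/2) (ε (2 - ε)) ^ c`, so `n ≤ M ^ d` for a constant `M` and `n ^ (1/d)` stays bounded. -/

open Filter Topology

section SymmetricBetaIntegrand

variable {c : ℝ}

lemma continuous_rpow_mul_one_sub_rpow (hc : 0 ≤ c) :
    Continuous fun s : ℝ => s ^ c * (1 - s) ^ c := by
  have h : Continuous fun s : ℝ => s ^ c := continuous_id.rpow_const fun _ => Or.inr hc
  exact h.mul (h.comp (continuous_const.sub continuous_id))

lemma rpow_mul_one_sub_rpow_le {s m : ℝ} (hc : 0 ≤ c) (hs0 : 0 ≤ s) (hs1 : s ≤ 1)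
    (hm : s * (1 - s) ≤ m) : s ^ c * (1 - s) ^ c ≤ m ^ c := by
  rw [← mul_rpow hs0 (by linarith)]
  exact rpow_le_rpow (mul_nonneg hs0 (by linarith)) hm hc

lemma rpow_le_rpow_mul_one_sub_rpow {s m : ℝ} (hc : 0 ≤ c) (hs0 : 0 ≤ s) (hs1 : s ≤ 1)
    (hm0 : 0 ≤ m) (hm : m ≤ s * (1 - s)) : m ^ c ≤ s ^ c * (1 - s) ^ c := by
  rw [← mul_rpow hs0 (by linarith)]
  exact rpow_le_rpow hm0 hm hc

lemma integral_rpow_mul_one_sub_rpow_le {u v m : ℝ} (hc : 0 ≤ c) (hu : 0 ≤ u) (huv : u ≤ v)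
    (hv : v ≤ 1) (hm : ∀ s ∈ Icc u v, s * (1 - s) ≤ m) :
    ∫ s in u..v, s ^ c * (1 - s) ^ c ≤ (v - u) * m ^ c := by
  simpa using intervalIntegral.integral_mono_on (μ := volume) huv
    ((continuous_rpow_mul_one_sub_rpow hc).intervalIntegrable u v)
    (continuous_const.intervalIntegrable u v)
    fun s hs => rpow_mul_one_sub_rpow_le hc (hu.trans hs.1) (hs.2.trans hv) (hm s hs)

lemma le_integral_rpow_mul_one_sub_rpow {u v m : ℝ} (hc : 0 ≤ c) (hu : 0 ≤ u) (huv : u ≤ v)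
    (hv : v ≤ 1) (hm0 : 0 ≤ m) (hm : ∀ s ∈ Icc u v, m ≤ s * (1 - s)) :
    (v - u) * m ^ c ≤ ∫ s in u..v, s ^ c * (1 - s) ^ c := by
  simpa using intervalIntegral.integral_mono_on (μ := volume) huv (continuous_const.intervalIntegrable u v)
    ((continuous_rpow_mul_one_sub_rpow hc).intervalIntegrable u v)
    fun s hs => rpow_le_rpow_mul_one_sub_rpow hc (hu.trans hs.1) (hs.2.trans hv) hm0 (hm s hs)

lemma integral_rpow_mul_one_sub_rpow_mono_interval {u a b v : ℝ} (hc : 0 ≤ c) (hu : 0 ≤ u)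
    (hua : u ≤ a) (hab : a ≤ b) (hbv : b ≤ v) (hv : v ≤ 1) :
    ∫ s in a..b, s ^ c * (1 - s) ^ c ≤ ∫ s in u..v, s ^ c * (1 - s) ^ c :=
  intervalIntegral.integral_mono_interval hua hab hbv
    (ae_restrict_of_forall_mem measurableSet_Ioc fun s hs =>
      mul_nonneg (rpow_nonneg (hu.trans_lt hs.1).le c)
        (rpow_nonneg (by linarith [hs.2]) c))
    ((continuous_rpow_mul_one_sub_rpow hc).intervalIntegrable u v)

end SymmetricBetaIntegrand

lemma regIncBeta_of_mem_Ioo {a b x : ℝ} (hx : x ∈ Ioo 0 1) :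
    regIncBeta a b x = (∫ s in (0:ℝ)..x, s ^ (a - 1) * (1 - s) ^ (b - 1)) / betaFun a b := by
  rw [regIncBeta, if_neg (not_le.2 hx.1), if_neg (not_le.2 hx.2)]

section SymmetricBeta

variable {a : ℝ}

lemma betaFun_le_quarter_rpow (ha : 1 ≤ a) : betaFun a a ≤ (1 / 4) ^ (a - 1) := by
  unfold betaFun
  simpa using integral_rpow_mul_one_sub_rpow_le (sub_nonneg.2 ha) le_rfl zero_le_one le_rfl
    fun s _ => by nlinarith [sq_nonneg (s - 1 / 2)]

lemma half_mul_rpow_le_betaFun {ε : ℝ} (ha : 1 ≤ a) (hε0 : 0 ≤ ε) (hε1 : ε ≤ 1) :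
    ε / 2 * ((1 - ε ^ 2) / 4) ^ (a - 1) ≤ betaFun a a := by
  have hc : 0 ≤ a - 1 := sub_nonneg.2 ha
  calc ε / 2 * ((1 - ε ^ 2) / 4) ^ (a - 1)
      = (1 / 2 - (1 / 2 - ε / 2)) * ((1 - ε ^ 2) / 4) ^ (a - 1) := by ring
    _ ≤ ∫ s in (1 / 2 - ε / 2)..(1 / 2), s ^ (a - 1) * (1 - s) ^ (a - 1) :=
      le_integral_rpow_mul_one_sub_rpow hc (by linarith) (by linarith) (by norm_num)
        (by nlinarith) fun s hs => by nlinarith [hs.1, hs.2]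
    _ ≤ betaFun a a :=
      integral_rpow_mul_one_sub_rpow_mono_interval hc le_rfl (by linarith) (by linarith)
        (by norm_num) le_rfl

theorem regIncBeta_le {ε x : ℝ} (ha : 1 ≤ a) (hε : 0 < ε) (hx0 : 0 < x) (hx : x ≤ 1 / 2 - ε) :
    regIncBeta a a x ≤ ((1 - 4 * ε ^ 2) / (1 - ε ^ 2)) ^ (a - 1) / ε := by
  have hc : 0 ≤ a - 1 := sub_nonneg.2 ha
  have hq : 0 < 1 - 4 * ε ^ 2 := by nlinarith
  have hp : 0 < 1 - ε ^ 2 := by nlinarith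
  have hF : ∫ s in (0:ℝ)..x, s ^ (a - 1) * (1 - s) ^ (a - 1)
      ≤ 1 / 2 * ((1 - 4 * ε ^ 2) / 4) ^ (a - 1) :=
    calc _ ≤ ∫ s in (0:ℝ)..(1 / 2 - ε), s ^ (a - 1) * (1 - s) ^ (a - 1) :=
          integral_rpow_mul_one_sub_rpow_mono_interval hc le_rfl le_rfl hx0.le hx (by linarith)
      _ ≤ (1 / 2 - ε - 0) * ((1 - 4 * ε ^ 2) / 4) ^ (a - 1) :=
          integral_rpow_mul_one_sub_rpow_le hc le_rfl (by linarith) (by linarith)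
            fun s hs => by nlinarith [hs.1, hs.2]
      _ ≤ _ := by gcongr; linarith
  rw [regIncBeta_of_mem_Ioo ⟨hx0, by linarith⟩]
  calc _ ≤ (1 / 2 * ((1 - 4 * ε ^ 2) / 4) ^ (a - 1)) / (ε / 2 * ((1 - ε ^ 2) / 4) ^ (a - 1)) :=
        div_le_div₀ (by positivity) hF (by positivity)
          (half_mul_rpow_le_betaFun ha hε.le (by linarith))
    _ = _ := by
        rw [div_rpow hq.le (by norm_num), div_rpow hp.le (by norm_num),
          div_rpow hq.le hp.le]
        field_simp

theorem le_regIncBeta {ε x : ℝ} (ha : 1 ≤ a) (hε0 : 0 < ε) (hε : ε ≤ 1 / 2) (hεx : ε ≤ x)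
    (hx : x < 1) : ε / 2 * (ε * (2 - ε)) ^ (a - 1) ≤ regIncBeta a a x := by
  have hc : 0 ≤ a - 1 := sub_nonneg.2 ha
  have hρ : 0 ≤ ε * (2 - ε) := by nlinarith
  have hp : 0 < 1 - ε ^ 2 := by nlinarith
  have hF : ε / 2 * (ε * (2 - ε) / 4) ^ (a - 1)
      ≤ ∫ s in (0:ℝ)..x, s ^ (a - 1) * (1 - s) ^ (a - 1) :=
    calc _ = (ε - ε / 2) * (ε * (2 - ε) / 4) ^ (a - 1) := by ring
      _ ≤ ∫ s in (ε / 2)..ε, s ^ (a - 1) * (1 - s) ^ (a - 1) :=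
          le_integral_rpow_mul_one_sub_rpow hc (by linarith) (by linarith) (by linarith)
            (by positivity) fun s hs => by nlinarith [hs.1, hs.2]
      _ ≤ _ := integral_rpow_mul_one_sub_rpow_mono_interval hc le_rfl (by linarith)
          (by linarith) hεx hx.le
  have hB : 0 < betaFun a a := lt_of_lt_of_le (by have := hp; positivity)
    (half_mul_rpow_le_betaFun ha hε0.le (by linarith))
  rw [regIncBeta_of_mem_Ioo ⟨by linarith, hx⟩, le_div_iff₀ hB]
  calc _ ≤ ε / 2 * (ε * (2 - ε)) ^ (a - 1) * (1 / 4) ^ (a - 1) := by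
        gcongr; exact betaFun_le_quarter_rpow ha
    _ = ε / 2 * (ε * (2 - ε) / 4) ^ (a - 1) := by
        rw [mul_assoc, ← mul_rpow hρ (by norm_num), mul_one_div]
    _ ≤ _ := hF

end SymmetricBeta

lemma rpow_one_div_le_of_le_mul_rpow {N K q c : ℝ} {d : ℕ} (hd : 0 < d) (hN : 0 ≤ N)
    (hK : 1 ≤ K) (hq : 1 ≤ q) (hc : c ≤ d / 2) (h : N ≤ K * q ^ c) :
    N ^ (1 / (d : ℝ)) ≤ K * q ^ (1 / 2 : ℝ) := by
  have hd' : (1 : ℝ) ≤ d := by exact_mod_cast hd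
  calc N ^ (1 / (d : ℝ)) ≤ (K * q ^ c) ^ (1 / (d : ℝ)) := by gcongr
    _ = K ^ (1 / (d : ℝ)) * q ^ (c / d) := by
        rw [mul_rpow (by linarith) (by positivity), ← rpow_mul (by linarith), mul_one_div]
    _ ≤ K ^ (1 : ℝ) * q ^ (1 / 2 : ℝ) :=
        mul_le_mul (rpow_le_rpow_of_exponent_le hK (div_le_one_of_le₀ hd' (by positivity)))
          (rpow_le_rpow_of_exponent_le hq ((div_le_iff₀ (by positivity)).2 (by linarith)))
          (by positivity) (by positivity)
    _ = K * q ^ (1 / 2 : ℝ) := by rw [rpow_one]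

section Quantile

variable {n : ℕ → ℕ} {κ : ℕ → ℝ}

theorem eventually_half_sub_lt_of_tendsto_log_div
    (hκ : ∀ᶠ d in atTop, κ d ∈ Ioc (0:ℝ) (1 / 2) ∧
      regIncBeta (((d:ℝ) - 1) / 2) (((d:ℝ) - 1) / 2) (κ d) = 1 / (n d : ℝ))
    (hn : ∀ᶠ d in atTop, (1:ℝ) ≤ n d)
    (hlog : Tendsto (fun d => log (n d) / (d:ℝ)) atTop (𝓝 0)) {ε : ℝ} (hε : 0 < ε) :
    ∀ᶠ d in atTop, 1 / 2 - ε < κ d := by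
  rcases le_or_gt (1 / 2) ε with hε2 | hε2
  · filter_upwards [hκ] with d hd
    linarith [hd.1.1]
  set q := (1 - 4 * ε ^ 2) / (1 - ε ^ 2)
  have hq0 : 0 < q := div_pos (by nlinarith) (by nlinarith)
  have hL : 0 < -log q := neg_pos.2 (log_neg hq0 ((div_lt_one (by nlinarith)).2 (by nlinarith)))
  have hsmall : ∀ᶠ d : ℕ in atTop, log (n d) < log ε - (((d:ℝ) - 1) / 2 - 1) * log q := by
    have h := (hlog.add (tendsto_const_div_atTop_nhds_zero_nat (-(3 / 2) * log q - log ε)))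
    rw [add_zero] at h
    filter_upwards [h.eventually (gt_mem_nhds (half_pos hL)), eventually_gt_atTop 0]
      with d hd hd0
    rw [← add_div, div_lt_iff₀ (by exact_mod_cast hd0)] at hd
    linarith
  filter_upwards [hκ, hn, hsmall, eventually_ge_atTop 3] with d ⟨⟨hκ0, _⟩, hI⟩ hn1 hd hd3
  by_contra! hle
  have ha : (1:ℝ) ≤ ((d:ℝ) - 1) / 2 := by
    have : (3:ℝ) ≤ d := by exact_mod_cast hd3
    linarith
  have hqc : 0 < q ^ (((d:ℝ) - 1) / 2 - 1) := rpow_pos_of_pos hq0 _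
  have hbound : 1 / (n d : ℝ) ≤ q ^ (((d:ℝ) - 1) / 2 - 1) / ε :=
    hI ▸ regIncBeta_le ha hε hκ0 hle
  rw [div_le_div_iff₀ (by linarith) hε, one_mul, ← div_le_iff₀' hqc] at hbound
  have := log_le_log (div_pos hε hqc) hbound
  rw [log_div hε.ne' hqc.ne', log_rpow hq0] at this
  linarith

theorem eventually_lt_of_tendsto_rpow_one_div
    (hκ : ∀ᶠ d in atTop, κ d ∈ Ioc (0:ℝ) (1 / 2) ∧
      regIncBeta (((d:ℝ) - 1) / 2) (((d:ℝ) - 1) / 2) (κ d) = 1 / (n d : ℝ))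
    (hn : Tendsto (fun d => (n d : ℝ) ^ ((1:ℝ) / (d:ℝ))) atTop atTop) {ε : ℝ} (hε : 0 < ε) :
    ∀ᶠ d in atTop, κ d < ε := by
  set δ := min ε (1 / 2)
  have hδ0 : 0 < δ := lt_min hε one_half_pos
  have hδ : δ ≤ 1 / 2 := min_le_right _ _
  have hρ0 : 0 < δ * (2 - δ) := by nlinarith
  have hρ1 : δ * (2 - δ) ≤ 1 := by nlinarith [sq_nonneg (1 - δ)]
  filter_upwards [hκ, hn.eventually_gt_atTop ((2 / δ) * (δ * (2 - δ))⁻¹ ^ (1 / 2 : ℝ)),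
    eventually_ge_atTop 3] with d ⟨⟨_, hκ2⟩, hI⟩ hbig hd3
  by_contra! hle
  have hd : (3:ℝ) ≤ d := by exact_mod_cast hd3
  have hlow : δ / 2 * (δ * (2 - δ)) ^ (((d:ℝ) - 1) / 2 - 1) ≤ 1 / (n d : ℝ) :=
    hI ▸ le_regIncBeta (by linarith) hδ0 hδ ((min_le_left _ _).trans hle) (by linarith)
  have hpos : 0 < δ / 2 * (δ * (2 - δ)) ^ (((d:ℝ) - 1) / 2 - 1) := by positivity
  have hN : (n d : ℝ) ≤ (2 / δ) * (δ * (2 - δ))⁻¹ ^ (((d:ℝ) - 1) / 2 - 1) := by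
    have hn0 : (0:ℝ) < n d := one_div_pos.1 (hpos.trans_le hlow)
    rwa [le_one_div hpos hn0, one_div, mul_inv, inv_div, ← inv_rpow hρ0.le] at hlow
  refine hbig.not_ge (rpow_one_div_le_of_le_mul_rpow (by omega) (Nat.cast_nonneg _) ?_
    (one_le_inv₀ hρ0 |>.2 hρ1) (by linarith) hN)
  rw [le_div_iff₀ hδ0]
  linarith

end Quantile

/-- Let `κ_{n(d),d}` be the `1/n(d)` quantile of `Beta((d-1)/2,(d-1)/2)`.
If `n(d) → ∞` with `(log n(d))/d → 0` then `κ_{n(d),d} → 1/2`; if instead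
`n(d)^{1/d} → ∞` then `κ_{n(d),d} → 0`. -/
theorem stmt18 (n : ℕ → ℕ) (κ : ℕ → ℝ)
    (hκ : ∀ d, 3 ≤ d → κ d ∈ Set.Ioc (0:ℝ) (1/2) ∧
      regIncBeta (((d:ℝ) - 1)/2) (((d:ℝ) - 1)/2) (κ d) = 1/(n d : ℝ)) :
    ((Filter.Tendsto (fun d => (n d : ℝ)) Filter.atTop Filter.atTop →
      Filter.Tendsto (fun d => Real.log (n d) / (d:ℝ)) Filter.atTop (nhds 0) →
      Filter.Tendsto κ Filter.atTop (nhds (1/2))) ∧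
     (Filter.Tendsto (fun d => (n d : ℝ) ^ ((1:ℝ)/(d:ℝ))) Filter.atTop Filter.atTop →
      Filter.Tendsto κ Filter.atTop (nhds 0))) := by
  have hκ' := eventually_atTop.2 ⟨3, hκ⟩
  refine ⟨fun hn hlog => tendsto_order.2 ⟨fun b hb => ?_, fun b hb => ?_⟩,
    fun hn => tendsto_order.2 ⟨fun b hb => ?_, fun b hb => ?_⟩⟩
  · simpa using eventually_half_sub_lt_of_tendsto_log_div hκ' (hn.eventually_ge_atTop 1) hlog
      (sub_pos.2 hb)
  · exact hκ'.mono fun d hd => hd.1.2.trans_lt hb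
  · exact hκ'.mono fun d hd => hb.trans hd.1.1
  · exact eventually_lt_of_tendsto_rpow_one_div hκ' hn hb
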